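/- arXiv:1909.10149 — 3 statements merged into one kernel-verified Lean document; each statement's English description precedes it below -/
import Mathlib

section
/- Let α₁, ..., α_g and x be distinct elements of a field K. Then the determinant of the g×g matrix whose (i,j)-entry is 1/(α_i - x)^j equals (∏_{i=1}^g 1/(α_i - x)) · ∏_{1 ≤ i < j ≤ g} (α_i - α_j)/((α_i - x)(α_j - x)). In particular this determinant is nonzero. -/
open Finset in
theorem stmt_6 {K : Type*} [Field K] (g : ℕ) (hg : 1 ≤ g)
    (α : Fin g → K) (x : K) (hinj : Function.Injective α) (hx : ∀ i, α i ≠ x) :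
    (Matrix.of fun i j : Fin g => 1 / (α i - x) ^ ((j : ℕ) + 1)).det
      = (∏ i, 1 / (α i - x)) *
        ∏ i, ∏ j ∈ univ.filter (fun j => i < j),
          (α i - α j) / ((α i - x) * (α j - x)) ∧
    (Matrix.of fun i j : Fin g => 1 / (α i - x) ^ ((j : ℕ) + 1)).det ≠ 0 := by
  have hsub : ∀ i, α i - x ≠ 0 := fun i => sub_ne_zero.mpr (hx i)
  have key : (Matrix.of fun i j : Fin g => 1 / (α i - x) ^ ((j : ℕ) + 1)).det
      = (∏ i, 1 / (α i - x)) *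
        ∏ i, ∏ j ∈ univ.filter (fun j => i < j),
          (α i - α j) / ((α i - x) * (α j - x)) := by
    have h1 : (Matrix.of fun i j : Fin g => 1 / (α i - x) ^ ((j : ℕ) + 1))
        = Matrix.of fun i j : Fin g => (1 / (α i - x)) *
            Matrix.vandermonde (fun i => (α i - x)⁻¹) i j := by
      ext i j
      simp [Matrix.vandermonde, pow_succ, one_div, mul_comm, mul_pow]
    rw [h1, Matrix.det_mul_column, Matrix.det_vandermonde]
    congr 1
    apply Finset.prod_congr rfl
    intro i _
    rw [show (Finset.Ioi i) = univ.filter (fun j => i < j) by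
      ext j; simp [Finset.mem_Ioi]]
    apply Finset.prod_congr rfl
    intro j hj
    rw [inv_sub_inv (hsub j) (hsub i)]
    ring
  refine ⟨key, ?_⟩
  rw [key]
  apply mul_ne_zero
  · exact Finset.prod_ne_zero_iff.mpr fun i _ => by
      simp [hsub i]
  · refine Finset.prod_ne_zero_iff.mpr fun i _ =>
      Finset.prod_ne_zero_iff.mpr fun j hj => ?_
    have hij : i ≠ j := ne_of_lt (Finset.mem_filter.mp hj).2
    exact div_ne_zero (sub_ne_zero.mpr fun h => hij (hinj h))
      (mul_ne_zero (hsub i) (hsub j))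
end

section
/- Let K be a complete non-archimedean field and y ∈ K with |y| < 1. Let x, x' ∈ K with |x - x'| = 1 and |x|, |x'| ≤ 1, and let φ be the Möbius transformation with matrix (1/(x-x'))·([[x, -xx'],[1, -x']] - y·[[x', -xx'],[1, -x]]). Then for any a ∈ K with |a - x'| = 1, one has |φ(a) - x| ≤ |y|. -/
/-- Möbius action of a 2×2 matrix on a field element. -/
noncomputable def mobius {K : Type*} [Field K] (φ : Matrix (Fin 2) (Fin 2) K) (z : K) : K :=
  (φ 0 0 * z + φ 0 1) / (φ 1 0 * z + φ 1 1)

theorem stmt_17 {K : Type*} [NormedField K] [CompleteSpace K]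
    (hna : IsNonarchimedean (norm : K → ℝ))
    (x x' y : K) (hy : ‖y‖ < 1) (hxx : ‖x - x'‖ = 1)
    (hx : ‖x‖ ≤ 1) (hx' : ‖x'‖ ≤ 1)
    (φ : Matrix (Fin 2) (Fin 2) K)
    (hφ : φ = (x - x')⁻¹ •
      ((!![x, -(x * x'); 1, -x'] : Matrix (Fin 2) (Fin 2) K)
        - y • !![x', -(x * x'); 1, -x]))
    (a : K) (ha : ‖a - x'‖ = 1) :
    ‖mobius φ a - x‖ ≤ ‖y‖ := by
  have hc : (x - x') ≠ 0 := by
    intro h; rw [h, norm_zero] at hxx; norm_num at hxx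
  -- norm of a - x
  have hax : ‖a - x‖ ≤ 1 := by
    have : a - x = (a - x') + (x' - x) := by ring
    rw [this]
    refine le_trans (hna _ _) ?_
    rw [ha]
    have : ‖x' - x‖ = 1 := by rw [← norm_neg]; simpa using hxx
    simp [this]
  -- denominator D
  set D : K := (a - x') - y * (a - x) with hD
  have hyax : ‖y * (a - x)‖ < 1 := by
    rw [norm_mul]
    calc ‖y‖ * ‖a - x‖ ≤ ‖y‖ * 1 := by
          exact mul_le_mul_of_nonneg_left hax (norm_nonneg _)
      _ = ‖y‖ := mul_one _
      _ < 1 := hy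
  have hDge : 1 ≤ ‖D‖ := by
    have h1 : a - x' = D + y * (a - x) := by rw [hD]; ring
    have h2 : (1 : ℝ) ≤ max ‖D‖ ‖y * (a - x)‖ := by
      rw [← ha, h1]; exact hna _ _
    rcases max_cases ‖D‖ ‖y * (a - x)‖ with ⟨he, _⟩ | ⟨he, _⟩
    · rwa [he] at h2
    · rw [he] at h2; linarith
  have hDne : D ≠ 0 := by
    intro h; rw [h, norm_zero] at hDge; linarith
  -- compute mobius φ a
  have hmob : mobius φ a - x = y * (a - x) * (x - x') / D := by
    have e0 : φ 0 0 = (x - x')⁻¹ * (x - y * x') := by simp [hφ]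
    have e1 : φ 0 1 = (x - x')⁻¹ * (-(x * x') + y * (x * x')) := by simp [hφ]
    have e2 : φ 1 0 = (x - x')⁻¹ * (1 - y) := by simp [hφ]
    have e3 : φ 1 1 = (x - x')⁻¹ * (-x' + y * x) := by simp [hφ]
    have hden : φ 1 0 * a + φ 1 1 = (x - x')⁻¹ * D := by
      rw [e2, e3, hD]; ring
    have hnum : φ 0 0 * a + φ 0 1 = (x - x')⁻¹ * (x * D + y * (a - x) * (x - x')) := by
      rw [e0, e1, hD]; ring
    rw [mobius, hnum, hden, mul_div_mul_left _ _ (inv_ne_zero hc)]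
    field_simp
    ring
  rw [hmob]
  rw [norm_div, norm_mul, norm_mul, hxx, mul_one]
  calc ‖y‖ * ‖a - x‖ / ‖D‖ ≤ ‖y‖ * 1 / 1 := by
        apply div_le_div₀ (by positivity)
          (mul_le_mul_of_nonneg_left hax (norm_nonneg _)) one_pos hDge
    _ = ‖y‖ := by ring
end

section
/- Let t = ∏_{s=2}^{l}(x_{h(s)} - x_{-h(s-1)}) / ∏_{s=1}^{l}(x_{h(s)} - x_{-h(s)}), where all the factors x_{h(s)} - x_{-h(s)} and x_{h(s)} - x_{-h(s-1)} are units in a commutative ring A. Then t is a unit in A, and if φ = φ₁ ⋯ φ_l is a product of matrices φ_s = (x_{h(s)} - x_{-h(s)})^{-1} [[x_{h(s)}, -x_{h(s)}x_{-h(s)}],[1, -x_{-h(s)}]] (the y = 0 specializations), then φ = t·[[x_{h(1)}, -x_{h(1)} x_{-h(l)}],[1, -x_{-h(l)}]]. -/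
/-! The matrix `!![a, -(a * b); 1, -b]` is the rank-one matrix `(a, 1)ᵀ (1, -b)`. Hence the
product of the matrices with parameters `(a, b)` and `(c, d)` is the one with parameters `(a, d)`
scaled by the inner pairing `(1, -b) (c, 1)ᵀ = c - b`; a chain of such products telescopes, and the
scalars `(x s - x' s)⁻¹` factor out. -/

theorem List.prod_ofFn_smul {R M : Type*} [CommMonoid R] [Monoid M] [MulAction R M]
    [IsScalarTower R M M] [SMulCommClass R M M] {n : ℕ} (c : Fin n → R) (N : Fin n → M) :
    (List.ofFn fun i => c i • N i).prod = (∏ i, c i) • (List.ofFn N).prod := by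
  induction n with
  | zero => simp
  | succ n ih =>
    rw [List.ofFn_succ, List.prod_cons, ih, List.ofFn_succ, List.prod_cons, Fin.prod_univ_succ,
      smul_mul_smul_comm]

namespace Matrix

variable {A : Type*} [CommRing A]

theorem rankOne_mul_rankOne (a b c d : A) :
    !![a, -(a * b); 1, -b] * !![c, -(c * d); 1, -d] = (c - b) • !![a, -(a * d); 1, -d] := by
  ext i j
  fin_cases i <;> fin_cases j <;> simp [Matrix.mul_apply, Fin.sum_univ_two] <;> ring

theorem prod_ofFn_rankOne {l : ℕ} (x x' : Fin (l + 1) → A) :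
    (List.ofFn fun s => !![x s, -(x s * x' s); 1, -(x' s)]).prod =
      (∏ s : Fin l, (x s.succ - x' s.castSucc)) •
        !![x 0, -(x 0 * x' (Fin.last l)); 1, -(x' (Fin.last l))] := by
  induction l with
  | zero => simp
  | succ l ih =>
    rw [List.ofFn_succ, List.prod_cons, ih (fun s => x s.succ) (fun s => x' s.succ), mul_smul_comm,
      rankOne_mul_rankOne, smul_smul, Fin.prod_univ_succ]
    simp only [Fin.succ_last, Fin.succ_zero_eq_one, Fin.castSucc_zero,
      Fin.succ_castSucc, mul_comm]

end Matrix

theorem stmt_19 {A : Type*} [CommRing A] (l : ℕ)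
    (x x' : Fin (l + 1) → A)
    (h1 : ∀ s, IsUnit (x s - x' s))
    (h2 : ∀ s : Fin l, IsUnit (x s.succ - x' s.castSucc)) :
    let t : A := Ring.inverse (∏ s, (x s - x' s)) *
      ∏ s : Fin l, (x s.succ - x' s.castSucc)
    let φ : Matrix (Fin 2) (Fin 2) A :=
      (List.ofFn fun s : Fin (l + 1) =>
        Ring.inverse (x s - x' s) •
          (!![x s, -(x s * x' s); 1, -(x' s)] : Matrix (Fin 2) (Fin 2) A)).prod
    IsUnit t ∧
    φ = t • !![x 0, -(x 0 * x' (Fin.last l)); 1, -(x' (Fin.last l))] := by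
  intro t φ
  refine ⟨(isUnit_ringInverse.mpr (IsUnit.prod_univ_iff.mpr h1)).mul
    (IsUnit.prod_univ_iff.mpr h2), ?_⟩
  have inverse_prod : Ring.inverse (∏ s, (x s - x' s)) = ∏ s, Ring.inverse (x s - x' s) :=
    map_prod (MonoidWithZero.inverse (M := A)) _ _
  simp only [φ, t, List.prod_ofFn_smul, Matrix.prod_ofFn_rankOne, smul_smul, inverse_prod]
end
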